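/- arXiv:2311.14660 — 5 statements merged into one kernel-verified Lean document; each statement's English description precedes it below -/
import Mathlib

section
/- Let ρ : [0,1] → ℝ be a continuous function in H¹(0,1) with ρ > 0 and ∫₀¹ ρ = 1. Then for every x ∈ [0,1], |ρ(x)^{-1/2} − 1| ≤ (1/2) (∫₀¹ ρ_x²/ρ³ dx)^{1/2}. -/
open MeasureTheory

/-- Cauchy–Schwarz type bound on [0,1]: ∫|g| ≤ √(∫ g²). -/
lemma cs_aux (g : ℝ → ℝ) (hg : ContinuousOn g (Set.Icc 0 1)) :
    (∫ y in (0:ℝ)..1, |g y|) ≤ Real.sqrt (∫ y in (0:ℝ)..1, (g y)^2) := by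
  have hIcc : Set.uIcc (0:ℝ) 1 = Set.Icc 0 1 := Set.uIcc_of_le zero_le_one
  have hgint : IntervalIntegrable g volume 0 1 :=
    (hIcc ▸ hg).intervalIntegrable
  set I := ∫ y in (0:ℝ)..1, (g y)^2 with hIdef
  have hI0 : 0 ≤ I := by
    apply intervalIntegral.integral_nonneg zero_le_one
    intro u _; positivity
  refine le_of_forall_pos_le_add (fun ε hε => ?_)
  set t := Real.sqrt I + ε with ht
  have ht0 : 0 < t := by positivity
  have hIt : I ≤ t^2 := by
    have h1 : Real.sqrt I ≤ t := by simp [ht]; positivity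
    calc I = (Real.sqrt I)^2 := (Real.sq_sqrt hI0).symm
      _ ≤ t^2 := by nlinarith [Real.sqrt_nonneg I]
  have hrhsint : IntervalIntegrable (fun y => (g y)^2 / (2*t) + t/2) volume 0 1 := by
    apply ContinuousOn.intervalIntegrable
    rw [hIcc]
    exact (((hg.pow 2).div_const _).add continuousOn_const)
  have hstep : (∫ y in (0:ℝ)..1, |g y|) ≤ ∫ y in (0:ℝ)..1, ((g y)^2 / (2*t) + t/2) := by
    apply intervalIntegral.integral_mono_on zero_le_one hgint.abs hrhsint
    intro y _
    rw [div_add_div _ _ (by positivity) (two_ne_zero), le_div_iff₀ (by positivity)]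
    nlinarith [sq_abs (g y), sq_nonneg (|g y| - t)]
  have hval : (∫ y in (0:ℝ)..1, ((g y)^2 / (2*t) + t/2)) = I/(2*t) + t/2 := by
    have h1 : IntervalIntegrable (fun y => (g y)^2 / (2*t)) volume 0 1 := by
      apply ContinuousOn.intervalIntegrable; rw [hIcc]; exact (hg.pow 2).div_const _
    rw [intervalIntegral.integral_add h1 intervalIntegrable_const,
        intervalIntegral.integral_div, intervalIntegral.integral_const]
    simp [hIdef]
  have hfin : I/(2*t) + t/2 ≤ t := by
    have : I/(2*t) ≤ t/2 := by
      rw [div_le_div_iff₀ (by positivity) two_pos]; nlinarith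
    linarith
  calc (∫ y in (0:ℝ)..1, |g y|) ≤ I/(2*t) + t/2 := hval ▸ hstep
    _ ≤ t := hfin
    _ = Real.sqrt I + ε := ht

/-- For a continuous H¹ density ρ > 0 on [0,1] with unit mass,
    |ρ(x)^{-1/2} − 1| ≤ (1/2) (∫₀¹ ρ_x²/ρ³)^{1/2} for all x ∈ [0,1]. -/
theorem stmt_3 (ρ ρ' : ℝ → ℝ)
    (hderiv : ∀ x, HasDerivAt ρ (ρ' x) x)
    (hcont : ContinuousOn ρ' (Set.Icc 0 1))
    (hpos : ∀ x ∈ Set.Icc (0:ℝ) 1, 0 < ρ x)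
    (hmass : (∫ x in (0:ℝ)..1, ρ x) = 1) :
    ∀ x ∈ Set.Icc (0:ℝ) 1,
      |(ρ x) ^ (-(1/2) : ℝ) - 1| ≤
        1/2 * Real.sqrt (∫ y in (0:ℝ)..1, (ρ' y)^2 / (ρ y)^3) := by
  have hIcc : Set.uIcc (0:ℝ) 1 = Set.Icc 0 1 := Set.uIcc_of_le zero_le_one
  have hρc : Continuous ρ := continuous_iff_continuousAt.2 fun x => (hderiv x).continuousAt
  -- find x₀ with ρ x₀ = 1
  obtain ⟨xm, hxm, hmin⟩ := isCompact_Icc.exists_isMinOn (Set.nonempty_Icc.2 zero_le_one)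
    hρc.continuousOn
  obtain ⟨xM, hxM, hmax⟩ := isCompact_Icc.exists_isMaxOn (Set.nonempty_Icc.2 zero_le_one)
    hρc.continuousOn
  have hρint : IntervalIntegrable ρ volume 0 1 := hρc.intervalIntegrable 0 1
  have hm1 : ρ xm ≤ 1 := by
    have h := intervalIntegral.integral_mono_on (f := fun _ => ρ xm) zero_le_one
      intervalIntegrable_const hρint (fun y hy => hmin hy)
    simpa [hmass] using h
  have hM1 : (1:ℝ) ≤ ρ xM := by
    have h := intervalIntegral.integral_mono_on (g := fun _ => ρ xM) zero_le_one
      hρint intervalIntegrable_const (fun y hy => hmax hy)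
    simpa [hmass] using h
  obtain ⟨x₀, hx₀mem, hx₀⟩ := intermediate_value_uIcc
    (hρc.continuousOn (s := Set.uIcc xm xM)) ⟨le_trans inf_le_left hm1, le_trans hM1 le_sup_right⟩
  have hx₀1 : x₀ ∈ Set.Icc (0:ℝ) 1 := Set.uIcc_subset_Icc hxm hxM hx₀mem
  -- the derivative of ρ^{-1/2}
  set g : ℝ → ℝ := fun y => ρ' y * (-(1/2):ℝ) * ρ y ^ (-(1/2) - 1 : ℝ) with hg
  have hgcont : ContinuousOn g (Set.Icc 0 1) := by
    apply ContinuousOn.mul (hcont.mul continuousOn_const)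
    exact hρc.continuousOn.rpow_const (fun y hy => Or.inl (hpos y hy).ne')
  have hgint01 : IntervalIntegrable g volume 0 1 := (hIcc ▸ hgcont).intervalIntegrable
  intro x hx
  have hsub : Set.uIcc x₀ x ⊆ Set.Icc 0 1 := Set.uIcc_subset_Icc hx₀1 hx
  have hgintx : IntervalIntegrable g volume x₀ x :=
    hgint01.mono_set (hIcc ▸ hsub)
  have hd : ∀ y ∈ Set.uIcc x₀ x, HasDerivAt (fun z => ρ z ^ (-(1/2):ℝ)) (g y) y := fun y hy =>
    (hderiv y).rpow_const (Or.inl (hpos y (hsub hy)).ne')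
  have hftc : ∫ y in x₀..x, g y = ρ x ^ (-(1/2):ℝ) - ρ x₀ ^ (-(1/2):ℝ) :=
    intervalIntegral.integral_eq_sub_of_hasDerivAt hd hgintx
  have hx₀one : ρ x₀ ^ (-(1/2):ℝ) = 1 := by rw [hx₀, Real.one_rpow]
  -- bound |∫| by ∫₀¹ |g|
  have habsint : IntervalIntegrable (fun y => |g y|) volume 0 1 := hgint01.abs
  have hgabs_nonneg : (0:ℝ→ℝ) ≤ᵐ[volume.restrict (Set.Ioc (0:ℝ) 1)] fun y => |g y| :=
    Filter.Eventually.of_forall fun y => abs_nonneg (g y)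
  have habs : |∫ y in x₀..x, g y| ≤ ∫ y in (0:ℝ)..1, |g y| := by
    rcases le_total x₀ x with h | h
    · calc |∫ y in x₀..x, g y| ≤ ∫ y in x₀..x, |g y| :=
            intervalIntegral.abs_integral_le_integral_abs h
        _ ≤ ∫ y in (0:ℝ)..1, |g y| :=
            intervalIntegral.integral_mono_interval hx₀1.1 h hx.2 hgabs_nonneg habsint
    · have hsymm : |∫ y in x₀..x, g y| = |∫ y in x..x₀, g y| := by
        rw [intervalIntegral.integral_symm, abs_neg]
      rw [hsymm]
      calc |∫ y in x..x₀, g y| ≤ ∫ y in x..x₀, |g y| :=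
            intervalIntegral.abs_integral_le_integral_abs h
        _ ≤ ∫ y in (0:ℝ)..1, |g y| :=
            intervalIntegral.integral_mono_interval hx.1 h hx₀1.2 hgabs_nonneg habsint
  -- identify ∫ g² with (1/4)∫ ρ'²/ρ³
  have hcong : (∫ y in (0:ℝ)..1, (g y)^2)
      = ∫ y in (0:ℝ)..1, (1/4:ℝ) * ((ρ' y)^2 / (ρ y)^3) := by
    apply intervalIntegral.integral_congr
    intro y hy
    rw [hIcc] at hy
    have hρy := hpos y hy
    have h1 : (ρ y ^ (-(1/2) - 1 : ℝ))^2 = ((ρ y)^3)⁻¹ := by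
      rw [← Real.rpow_natCast (ρ y ^ (-(1/2) - 1 : ℝ)) 2, ← Real.rpow_mul hρy.le]
      rw [show ((-(1/2) - 1 : ℝ) * (2:ℕ)) = -(3:ℕ) by push_cast; ring]
      rw [Real.rpow_neg hρy.le, Real.rpow_natCast]
    calc (g y)^2 = (ρ' y)^2 * (1/4:ℝ) * (ρ y ^ (-(1/2) - 1 : ℝ))^2 := by rw [hg]; ring
      _ = (1/4:ℝ) * ((ρ' y)^2 / (ρ y)^3) := by rw [h1, div_eq_mul_inv]; ring
  have hconst : (∫ y in (0:ℝ)..1, (1/4:ℝ) * ((ρ' y)^2 / (ρ y)^3))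
      = (1/4:ℝ) * ∫ y in (0:ℝ)..1, (ρ' y)^2 / (ρ y)^3 :=
    intervalIntegral.integral_const_mul _ _
  have hsqrt : Real.sqrt (∫ y in (0:ℝ)..1, (g y)^2)
      = 1/2 * Real.sqrt (∫ y in (0:ℝ)..1, (ρ' y)^2 / (ρ y)^3) := by
    rw [hcong, hconst, Real.sqrt_mul (by norm_num : (0:ℝ) ≤ 1/4),
      show ((1:ℝ)/4) = (1/2)^2 by norm_num, Real.sqrt_sq (by norm_num : (0:ℝ) ≤ 1/2)]
  calc |(ρ x) ^ (-(1/2) : ℝ) - 1| = |∫ y in x₀..x, g y| := by rw [hftc, hx₀one]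
    _ ≤ ∫ y in (0:ℝ)..1, |g y| := habs
    _ ≤ Real.sqrt (∫ y in (0:ℝ)..1, (g y)^2) := cs_aux g hgcont
    _ = 1/2 * Real.sqrt (∫ y in (0:ℝ)..1, (ρ' y)^2 / (ρ y)^3) := hsqrt
end

section
/- Let ρ : [0,1] → ℝ be a continuous H¹ function with ρ > 0 and ∫₀¹ ρ = 1. Then for every x ∈ [0,1], |log ρ(x)| ≤ (∫₀¹ ρ dy)^{1/2} · (∫₀¹ ρ_y²/ρ³ dy)^{1/2} = (∫₀¹ ρ_y²/ρ³ dy)^{1/2}. Consequently max{‖ρ‖_{L∞}, ‖ρ^{-1}‖_{L∞}} ≤ exp((∫₀¹ ρ_y²/ρ³ dy)^{1/2}). -/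
/-!
Since `∫₀¹ ρ = 1`, the mean value theorem for integrals gives a point `x₀` with `ρ x₀ = 1`.
Then `log ρ x = ∫_{x₀}^x ρ'/ρ`, and writing `ρ'/ρ = √ρ · ρ'/ρ^{3/2}` the Cauchy–Schwarz
inequality bounds this by `(∫₀¹ ρ)^{1/2} (∫₀¹ ρ'²/ρ³)^{1/2}`. Exponentiating bounds `ρ` and `ρ⁻¹`.
-/

open MeasureTheory Set

theorem abs_integral_mul_le_sqrt_mul_sqrt {α : Type*} [MeasurableSpace α] {μ : Measure α}
    {f g : α → ℝ} (hf : Integrable (fun x => f x ^ 2) μ) (hg : Integrable (fun x => g x ^ 2) μ)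
    (hfg : Integrable (fun x => f x * g x) μ) :
    |∫ x, f x * g x ∂μ| ≤ √(∫ x, f x ^ 2 ∂μ) * √(∫ x, g x ^ 2 ∂μ) := by
  set A := ∫ x, f x ^ 2 ∂μ
  set B := ∫ x, f x * g x ∂μ
  set C := ∫ x, g x ^ 2 ∂μ
  have hquad : ∀ t : ℝ, 0 ≤ A * (t * t) + (2 * B) * t + C := fun t => by
    have hexpand : ∫ x, (t * f x + g x) ^ 2 ∂μ = A * (t * t) + (2 * B) * t + C := by
      have hpoint : ∀ x, (t * f x + g x) ^ 2 =
          (t * t) * f x ^ 2 + (2 * t) * (f x * g x) + g x ^ 2 := fun x => by ring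
      simp_rw [hpoint]
      have hsum : Integrable (fun x => (t * t) * f x ^ 2 + (2 * t) * (f x * g x)) μ :=
        (hf.const_mul _).add (hfg.const_mul _)
      rw [integral_add hsum hg, integral_add (hf.const_mul _) (hfg.const_mul _),
        integral_const_mul, integral_const_mul]
      ring
    exact hexpand ▸ integral_nonneg fun x => sq_nonneg _
  have hA : 0 ≤ A := integral_nonneg fun x => sq_nonneg _
  have hB : B ^ 2 ≤ A * C := by
    have := discrim_le_zero hquad
    rw [discrim] at this
    nlinarith
  calc |B| = √(B ^ 2) := (Real.sqrt_sq_eq_abs B).symm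
    _ ≤ √(A * C) := Real.sqrt_le_sqrt hB
    _ = √A * √C := Real.sqrt_mul hA C

theorem exists_mem_Icc_intervalIntegral_eq_mul_sub {f : ℝ → ℝ} {a b : ℝ} (hab : a < b)
    (hf : ContinuousOn f (Icc a b)) : ∃ c ∈ Icc a b, ∫ t in a..b, f t = f c * (b - a) := by
  have huIcc : uIcc a b = Icc a b := uIcc_of_le hab.le
  have hF : ContinuousOn (fun x => ∫ t in a..x, f t) (Icc a b) :=
    huIcc ▸ intervalIntegral.continuousOn_primitive_interval (huIcc ▸ hf.integrableOn_Icc)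
  have hF' : ∀ x ∈ Ioo a b, HasDerivAt (fun x => ∫ t in a..x, f t) (f x) x := fun x hx =>
    intervalIntegral.integral_hasDerivAt_right
      ((hf.mono (Icc_subset_Icc le_rfl hx.2.le)).intervalIntegrable_of_Icc hx.1.le)
      ((hf.mono Ioo_subset_Icc_self).stronglyMeasurableAtFilter isOpen_Ioo x hx)
      (hf.continuousAt (Icc_mem_nhds hx.1 hx.2))
  obtain ⟨c, hc, hslope⟩ := exists_hasDerivAt_eq_slope _ f hab hF hF'
  refine ⟨c, Ioo_subset_Icc_self hc, ?_⟩
  rw [hslope, intervalIntegral.integral_same, sub_zero, div_mul_cancel₀ _ (sub_ne_zero.2 hab.ne')]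

theorem intervalIntegral_mono_interval_of_nonneg {f : ℝ → ℝ} {a b u v : ℝ} (hau : a ≤ u) (huv : u ≤ v)
    (hvb : v ≤ b) (hf : ContinuousOn f (Icc a b)) (hnonneg : ∀ t ∈ Icc a b, 0 ≤ f t) :
    ∫ t in u..v, f t ≤ ∫ t in a..b, f t :=
  intervalIntegral.integral_mono_interval hau huv hvb
    ((ae_restrict_mem measurableSet_Ioc).mono fun t ht => hnonneg t (Ioc_subset_Icc_self ht))
    (hf.intervalIntegrable_of_Icc (hau.trans (huv.trans hvb)))

theorem abs_log_sub_log_le_of_le {ρ ρ' : ℝ → ℝ} {u v : ℝ} (huv : u ≤ v)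
    (hderiv : ∀ t ∈ Icc u v, HasDerivAt ρ (ρ' t) t) (hcont : ContinuousOn ρ' (Icc u v))
    (hpos : ∀ t ∈ Icc u v, 0 < ρ t) :
    |Real.log (ρ v) - Real.log (ρ u)| ≤
      √(∫ t in u..v, ρ t) * √(∫ t in u..v, ρ' t ^ 2 / ρ t ^ 3) := by
  have hρ : ContinuousOn ρ (Icc u v) := fun t ht =>
    (hderiv t ht).continuousAt.continuousWithinAt
  have hsqrt : ∀ t ∈ Icc u v, 0 < √(ρ t) := fun t ht => Real.sqrt_pos.2 (hpos t ht)
  set f : ℝ → ℝ := fun t => √(ρ t)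
  set g : ℝ → ℝ := fun t => ρ' t / (ρ t * √(ρ t))
  have hf : ContinuousOn f (Icc u v) := hρ.sqrt
  have hg : ContinuousOn g (Icc u v) :=
    hcont.div (hρ.mul hf) fun t ht => (mul_pos (hpos t ht) (hsqrt t ht)).ne'
  have hint : ∀ {h : ℝ → ℝ}, ContinuousOn h (Icc u v) → Integrable h (volume.restrict (Ioc u v)) :=
    fun hh => hh.integrableOn_Icc.mono_set Ioc_subset_Icc_self
  have hftc : Real.log (ρ v) - Real.log (ρ u) = ∫ t in u..v, ρ' t / ρ t := by
    rw [intervalIntegral.integral_eq_sub_of_hasDerivAt]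
    · intro t ht
      rw [uIcc_of_le huv] at ht
      exact (hderiv t ht).log (hpos t ht).ne'
    · exact (hcont.div hρ fun t ht => (hpos t ht).ne').intervalIntegrable_of_Icc huv
  have hfg : EqOn (fun t => f t * g t) (fun t => ρ' t / ρ t) (Ioc u v) := fun t ht => by
    have hρt := hpos t (Ioc_subset_Icc_self ht)
    have hsqrtt := hsqrt t (Ioc_subset_Icc_self ht)
    simp only [f, g]
    field_simp
  have hf2 : EqOn (fun t => f t ^ 2) ρ (Ioc u v) := fun t ht =>
    Real.sq_sqrt (hpos t (Ioc_subset_Icc_self ht)).le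
  have hg2 : EqOn (fun t => g t ^ 2) (fun t => ρ' t ^ 2 / ρ t ^ 3) (Ioc u v) := fun t ht => by
    have hρt := hpos t (Ioc_subset_Icc_self ht)
    simp only [g, div_pow, mul_pow, Real.sq_sqrt hρt.le]
    ring
  rw [hftc, intervalIntegral.integral_of_le huv, intervalIntegral.integral_of_le huv,
    intervalIntegral.integral_of_le huv, ← setIntegral_congr_fun measurableSet_Ioc hfg,
    ← setIntegral_congr_fun measurableSet_Ioc hf2, ← setIntegral_congr_fun measurableSet_Ioc hg2]
  exact abs_integral_mul_le_sqrt_mul_sqrt (hint (hf.pow 2)) (hint (hg.pow 2)) (hint (hf.mul hg))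

theorem abs_log_sub_log_le {ρ ρ' : ℝ → ℝ} {a b x y : ℝ} (hx : x ∈ Icc a b) (hy : y ∈ Icc a b)
    (hderiv : ∀ t ∈ Icc a b, HasDerivAt ρ (ρ' t) t) (hcont : ContinuousOn ρ' (Icc a b))
    (hpos : ∀ t ∈ Icc a b, 0 < ρ t) :
    |Real.log (ρ x) - Real.log (ρ y)| ≤
      √(∫ t in a..b, ρ t) * √(∫ t in a..b, ρ' t ^ 2 / ρ t ^ 3) := by
  wlog hyx : y ≤ x generalizing x y
  · rw [abs_sub_comm]
    exact this hy hx (le_of_not_ge hyx)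
  have hsub : Icc y x ⊆ Icc a b := Icc_subset_Icc hy.1 hx.2
  have hρ : ContinuousOn ρ (Icc a b) := fun t ht =>
    (hderiv t ht).continuousAt.continuousWithinAt
  calc |Real.log (ρ x) - Real.log (ρ y)|
      ≤ √(∫ t in y..x, ρ t) * √(∫ t in y..x, ρ' t ^ 2 / ρ t ^ 3) :=
        abs_log_sub_log_le_of_le hyx (fun t ht => hderiv t (hsub ht)) (hcont.mono hsub)
          (fun t ht => hpos t (hsub ht))
    _ ≤ √(∫ t in a..b, ρ t) * √(∫ t in a..b, ρ' t ^ 2 / ρ t ^ 3) := by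
        gcongr
        · exact intervalIntegral_mono_interval_of_nonneg hy.1 hyx hx.2 hρ fun t ht => (hpos t ht).le
        · exact intervalIntegral_mono_interval_of_nonneg hy.1 hyx hx.2
            ((hcont.pow 2).div (hρ.pow 3) fun t ht => (pow_pos (hpos t ht) 3).ne')
            fun t ht => div_nonneg (sq_nonneg _) (pow_pos (hpos t ht) 3).le

theorem max_le_exp_of_abs_log_le {r c : ℝ} (hr : 0 < r) (h : |Real.log r| ≤ c) :
    max r r⁻¹ ≤ Real.exp c := by
  rw [abs_le] at h
  refine max_le ?_ ?_
  · calc r = Real.exp (Real.log r) := (Real.exp_log hr).symm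
      _ ≤ Real.exp c := Real.exp_le_exp.2 h.2
  · calc r⁻¹ = Real.exp (-Real.log r) := by rw [Real.exp_neg, Real.exp_log hr]
      _ ≤ Real.exp c := Real.exp_le_exp.2 (by linarith)

/-- For a continuous H¹ density ρ > 0 on [0,1] with unit mass:
    |log ρ(x)| ≤ (∫₀¹ ρ)^{1/2} (∫₀¹ ρ_y²/ρ³)^{1/2}, and consequently
    max{ρ(x), ρ(x)⁻¹} ≤ exp((∫₀¹ ρ_y²/ρ³)^{1/2}) for all x ∈ [0,1]. -/
theorem stmt_4 (ρ ρ' : ℝ → ℝ)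
    (hderiv : ∀ x, HasDerivAt ρ (ρ' x) x)
    (hcont : ContinuousOn ρ' (Set.Icc 0 1))
    (hpos : ∀ x ∈ Set.Icc (0:ℝ) 1, 0 < ρ x)
    (hmass : (∫ x in (0:ℝ)..1, ρ x) = 1) :
    (∀ x ∈ Set.Icc (0:ℝ) 1,
      |Real.log (ρ x)| ≤
        Real.sqrt (∫ y in (0:ℝ)..1, ρ y) *
          Real.sqrt (∫ y in (0:ℝ)..1, (ρ' y)^2 / (ρ y)^3)) ∧
    (∀ x ∈ Set.Icc (0:ℝ) 1,
      max (ρ x) (ρ x)⁻¹ ≤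
        Real.exp (Real.sqrt (∫ y in (0:ℝ)..1, (ρ' y)^2 / (ρ y)^3))) := by
  obtain ⟨x₀, hx₀, hρx₀⟩ : ∃ x₀ ∈ Icc (0 : ℝ) 1, ρ x₀ = 1 := by
    obtain ⟨c, hc, hmean⟩ := exists_mem_Icc_intervalIntegral_eq_mul_sub zero_lt_one
      fun x _ => (hderiv x).continuousAt.continuousWithinAt
    exact ⟨c, hc, by simpa [hmass] using hmean.symm⟩
  have hlog : ∀ x ∈ Icc (0 : ℝ) 1, |Real.log (ρ x)| ≤
      √(∫ y in (0:ℝ)..1, ρ y) * √(∫ y in (0:ℝ)..1, (ρ' y)^2 / (ρ y)^3) := fun x hx => by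
    simpa [hρx₀] using abs_log_sub_log_le hx hx₀ (fun t _ => hderiv t) hcont hpos
  refine ⟨hlog, fun x hx => max_le_exp_of_abs_log_le (hpos x hx) ?_⟩
  simpa [hmass] using hlog x hx
end

section
/- Let γ ≥ 1, ε ∈ (0,1], and let (r,v) be a smooth solution on [0,∞)×[0,1] of the deterministic acoustic system r_t + (1/ε)v_x = 0, v_t + (γ/ε)r_x = v_{xx}, with v(t,0) = v(t,1) = 0 and ∫₀¹ r(t,x)dx = 0. Then the energy G(r,v)(t) = ∫₀¹((1/2)(γr² + v²) + (ε/2)v r_x + (ε²/4)r_x²)dx satisfies G(r,v)(t) ≤ G(r,v)(0)·e^{−t/2} for all t ≥ 0. -/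
open MeasureTheory

/-!
Differentiating `G` along the flow and integrating by parts (the boundary terms vanish because
`v = 0` at both ends) gives the dissipation identity `G' = -(γ/2)‖r_x‖² - (1/2)‖v_x‖²`. Both `r`
(of mean zero) and `v` have a zero in `[0,1]`, so the Poincaré inequality `‖f‖² ≤ ‖f_x‖²` holds for
each; with Young's inequality on the cross term and `ε ≤ 1 ≤ γ` it yields `G ≤ γ‖r_x‖² + ‖v_x‖²`,
hence `G' ≤ -G/2`, and Grönwall's inequality concludes. The time derivative of `r_x`, which `G'`
involves, is not among the data: it comes from exchanging the mixed partials of `r`.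
-/

open Set Function Real

theorem hasDerivAt_intervalIntegral_of_continuous {E : Type*} [NormedAddCommGroup E]
    [NormedSpace ℝ E] [CompleteSpace E] {F F' : ℝ → ℝ → E} {a b : ℝ}
    (hF : Continuous (uncurry F)) (hF' : Continuous (uncurry F'))
    (hderiv : ∀ s x, HasDerivAt (F · x) (F' s x) s) (s₀ : ℝ) :
    HasDerivAt (fun s => ∫ x in a..b, F s x) (∫ x in a..b, F' s₀ x) s₀ := by
  obtain ⟨C, hC⟩ := ((isCompact_closedBall s₀ 1).prod isCompact_uIcc).exists_bound_of_continuousOn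
    hF'.continuousOn
  refine (intervalIntegral.hasDerivAt_integral_of_dominated_loc_of_deriv_le
    (bound := fun _ => C) (Metric.ball_mem_nhds s₀ one_pos)
    (Filter.Eventually.of_forall fun s => (hF.uncurry_left s).aestronglyMeasurable)
    ((hF.uncurry_left s₀).intervalIntegrable a b) (hF'.uncurry_left s₀).aestronglyMeasurable
    (ae_of_all _ fun x hx s hs =>
      hC (s, x) ⟨Metric.ball_subset_closedBall hs, uIoc_subset_uIcc hx⟩)
    intervalIntegrable_const (ae_of_all _ fun x _ s _ => hderiv s x)).2

theorem hasDerivAt_mixed_partial_comm {f fx g gx : ℝ → ℝ → ℝ}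
    (hft : ∀ t x, HasDerivAt (f · x) (g t x) t) (hfx : ∀ t x, HasDerivAt (f t ·) (fx t x) x)
    (hgx : ∀ t x, HasDerivAt (g t ·) (gx t x) x)
    (hg : Continuous (uncurry g)) (hgx_cont : Continuous (uncurry gx)) (t x : ℝ) :
    HasDerivAt (fx · x) (gx t x) t := by
  have hf_eq : ∀ t, (f t ·) = fun y => f 0 y + ∫ s in 0..t, g s y := fun t => funext fun y => by
    rw [intervalIntegral.integral_eq_sub_of_hasDerivAt (fun s _ => hft s y)
      ((hg.uncurry_right y).intervalIntegrable _ _)]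
    ring
  have hfx_eq : (fx · x) = fun t => fx 0 x + ∫ s in 0..t, gx s x := funext fun t =>
    (hfx t x).unique <| hf_eq t ▸ (hfx 0 x).add
      (hasDerivAt_intervalIntegral_of_continuous (F := fun y s => g s y) (F' := fun y s => gx s y)
        (hg.comp continuous_swap) (hgx_cont.comp continuous_swap) (fun y s => hgx s y) x)
  rw [hfx_eq]
  exact ((hgx_cont.uncurry_right x).integral_hasStrictDerivAt 0 t).hasDerivAt.const_add _

theorem sq_intervalIntegral_le_mul_integral_sq {g : ℝ → ℝ} {a b : ℝ} (hab : a ≤ b)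
    (hg : IntervalIntegrable g volume a b)
    (hg2 : IntervalIntegrable (fun x => g x ^ 2) volume a b) :
    (∫ x in a..b, g x) ^ 2 ≤ (b - a) * ∫ x in a..b, g x ^ 2 := by
  rcases hab.eq_or_lt with rfl | hlt
  · simp
  set m := (∫ x in a..b, g x) / (b - a)
  have hvar : 0 ≤ ∫ x in a..b, (g x - m) ^ 2 :=
    intervalIntegral.integral_nonneg hab fun x _ => sq_nonneg _
  have hexpand : ∫ x in a..b, (g x - m) ^ 2
      = (∫ x in a..b, g x ^ 2) - 2 * m * (∫ x in a..b, g x) + m ^ 2 * (b - a) := by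
    rw [intervalIntegral.integral_congr fun x _ => show (g x - m) ^ 2
        = g x ^ 2 - 2 * m * g x + m ^ 2 by ring,
      intervalIntegral.integral_add (hg2.sub (hg.const_mul _)) intervalIntegrable_const,
      intervalIntegral.integral_sub hg2 (hg.const_mul _), intervalIntegral.integral_const_mul,
      intervalIntegral.integral_const, smul_eq_mul]
    ring
  have hba : 0 < b - a := sub_pos.mpr hlt
  rw [hexpand] at hvar
  simp only [m] at hvar
  field_simp at hvar
  nlinarith

theorem exists_eq_zero_of_intervalIntegral_eq_zero {f : ℝ → ℝ} {a b : ℝ} (hab : a < b)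
    (hf : ContinuousOn f (Icc a b)) (h : ∫ x in a..b, f x = 0) : ∃ c ∈ Icc a b, f c = 0 := by
  rw [← uIcc_of_le hab.le] at hf ⊢
  obtain ⟨c, hc, hfc⟩ := exists_eq_interval_average hab.ne hf
  exact ⟨c, uIoo_subset_uIcc_self hc, by rw [hfc, interval_average_eq_div, h, zero_div]⟩

theorem sq_le_mul_integral_sq_deriv {f f' : ℝ → ℝ} {a b c x : ℝ}
    (hf : ∀ y, HasDerivAt f (f' y) y) (hf' : Continuous f')
    (hc : c ∈ Icc a b) (hfc : f c = 0) (hx : x ∈ Icc a b) :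
    f x ^ 2 ≤ (b - a) * ∫ y in a..b, f' y ^ 2 := by
  have hftc : ∀ p q, ∫ y in p..q, f' y = f q - f p := fun p q =>
    intervalIntegral.integral_eq_sub_of_hasDerivAt (fun y _ => hf y) (hf'.intervalIntegrable _ _)
  obtain ⟨p, q, hap, hpq, hqb, hsq⟩ : ∃ p q, a ≤ p ∧ p ≤ q ∧ q ≤ b ∧
      f x ^ 2 = (∫ y in p..q, f' y) ^ 2 := by
    rcases le_total c x with hcx | hxc
    · exact ⟨c, x, hc.1, hcx, hx.2, by rw [hftc, hfc, sub_zero]⟩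
    · exact ⟨x, c, hx.1, hxc, hc.2, by rw [hftc, hfc, zero_sub, neg_sq]⟩
  have hf'2 : Continuous fun y => f' y ^ 2 := hf'.pow 2
  calc f x ^ 2 ≤ (q - p) * ∫ y in p..q, f' y ^ 2 :=
        hsq ▸ sq_intervalIntegral_le_mul_integral_sq hpq (hf'.intervalIntegrable _ _)
          (hf'2.intervalIntegrable _ _)
    _ ≤ (b - a) * ∫ y in a..b, f' y ^ 2 := by
        gcongr
        · exact intervalIntegral.integral_nonneg hpq fun y _ => sq_nonneg _
        · linarith
        · exact intervalIntegral.integral_mono_interval hap hpq hqb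
            (ae_of_all _ fun y => sq_nonneg _) (hf'2.intervalIntegrable _ _)

theorem integral_sq_le_mul_integral_sq_deriv {f f' : ℝ → ℝ} {a b c : ℝ} (hab : a ≤ b)
    (hf : ∀ y, HasDerivAt f (f' y) y) (hf' : Continuous f') (hc : c ∈ Icc a b) (hfc : f c = 0) :
    ∫ x in a..b, f x ^ 2 ≤ (b - a) ^ 2 * ∫ y in a..b, f' y ^ 2 := by
  have hf2 : Continuous fun x => f x ^ 2 :=
    (continuous_iff_continuousAt.mpr fun x => (hf x).continuousAt).pow 2
  calc ∫ x in a..b, f x ^ 2 ≤ ∫ _ in a..b, (b - a) * ∫ y in a..b, f' y ^ 2 :=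
        intervalIntegral.integral_mono_on hab (hf2.intervalIntegrable _ _) intervalIntegrable_const
          fun x hx => sq_le_mul_integral_sq_deriv hf hf' hc hfc hx
    _ = (b - a) ^ 2 * ∫ y in a..b, f' y ^ 2 := by
        rw [intervalIntegral.integral_const, smul_eq_mul]; ring

theorem le_mul_exp_of_hasDerivAt_le_mul {f f' : ℝ → ℝ} {K : ℝ}
    (hf : ∀ t, HasDerivAt f (f' t) t) (hbound : ∀ t, f' t ≤ K * f t) {t : ℝ} (ht : 0 ≤ t) :
    f t ≤ f 0 * exp (K * t) := by
  have := le_gronwallBound_of_liminf_deriv_right_le (ε := 0)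
    (continuous_iff_continuousAt.mpr fun t => (hf t).continuousAt).continuousOn
    (fun s _ _ hr => (hf s).hasDerivWithinAt.liminf_right_slope_le hr) le_rfl
    (fun s _ => by simpa using hbound s) t ⟨ht, le_rfl⟩
  simpa [gronwallBound_ε0] using this

noncomputable def acousticEnergy (γ ε : ℝ) (r rx v : ℝ → ℝ) : ℝ :=
  ∫ x in (0:ℝ)..1, (1/2 * (γ * (r x)^2 + (v x)^2) + ε/2 * v x * rx x + ε^2/4 * (rx x)^2)

theorem hasDerivAt_acousticEnergy {γ ε : ℝ} (hε : ε ≠ 0) {r rx v vx vxx : ℝ → ℝ → ℝ}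
    (hrt : ∀ t x, HasDerivAt (r · x) (-(1/ε) * vx t x) t)
    (hrx : ∀ t x, HasDerivAt (r t ·) (rx t x) x)
    (hvt : ∀ t x, HasDerivAt (v · x) (vxx t x - γ/ε * rx t x) t)
    (hvx : ∀ t x, HasDerivAt (v t ·) (vx t x) x)
    (hvxx : ∀ t x, HasDerivAt (vx t ·) (vxx t x) x)
    (hr : Continuous (uncurry r)) (hrx_cont : Continuous (uncurry rx))
    (hv : Continuous (uncurry v)) (hvx_cont : Continuous (uncurry vx))
    (hvxx_cont : Continuous (uncurry vxx))
    (hbc0 : ∀ t, v t 0 = 0) (hbc1 : ∀ t, v t 1 = 0) (t : ℝ) :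
    HasDerivAt (fun t => acousticEnergy γ ε (r t) (rx t) (v t))
      (-(γ/2) * (∫ x in (0:ℝ)..1, rx t x ^ 2) - 1/2 * ∫ x in (0:ℝ)..1, vx t x ^ 2) t := by
  have hrxt : ∀ t x, HasDerivAt (rx · x) (-(1/ε) * vxx t x) t :=
    hasDerivAt_mixed_partial_comm hrt hrx (fun t x => (hvxx t x).const_mul _)
      (continuous_const.mul hvx_cont) (continuous_const.mul hvxx_cont)
  -- Once the equations are substituted, the energy density changes by exact `x`-derivatives,
  -- which integrate to zero as `v` vanishes at both ends, plus the dissipation.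
  have hdensity : ∀ s x, HasDerivAt
      (fun s => 1/2 * (γ * (r s x)^2 + (v s x)^2) + ε/2 * v s x * rx s x + ε^2/4 * (rx s x)^2)
      (-(γ/ε) * (rx s x * v s x + r s x * vx s x) + 1/2 * (vx s x * vx s x + v s x * vxx s x)
        - (γ/2 * rx s x ^ 2 + 1/2 * vx s x ^ 2)) s := fun s x => by
    refine ((((((hrt s x).pow 2).const_mul γ).add ((hvt s x).pow 2)).const_mul (1/2)).add
      (((hvt s x).const_mul (ε/2)).mul (hrxt s x))).add
      (((hrxt s x).pow 2).const_mul (ε^2/4)) |>.congr_deriv ?_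
    field_simp
    ring
  have hr_t := hr.uncurry_left t
  have hrx_t := hrx_cont.uncurry_left t
  have hv_t := hv.uncurry_left t
  have hvx_t := hvx_cont.uncurry_left t
  have hvxx_t := hvxx_cont.uncurry_left t
  have hrv : ∫ x in (0:ℝ)..1, (rx t x * v t x + r t x * vx t x) = 0 := by
    rw [intervalIntegral.integral_deriv_mul_eq_sub (fun x _ => hrx t x) (fun x _ => hvx t x)
      (hrx_t.intervalIntegrable _ _) (hvx_t.intervalIntegrable _ _), hbc0, hbc1]
    ring
  have hvv : ∫ x in (0:ℝ)..1, (vx t x * vx t x + v t x * vxx t x) = 0 := by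
    rw [intervalIntegral.integral_deriv_mul_eq_sub (fun x _ => hvx t x) (fun x _ => hvxx t x)
      (hvx_t.intervalIntegrable _ _) (hvxx_t.intervalIntegrable _ _), hbc0, hbc1]
    ring
  refine (hasDerivAt_intervalIntegral_of_continuous (by fun_prop) (by fun_prop) hdensity t)
    |>.congr_deriv ?_
  rw [intervalIntegral.integral_sub, intervalIntegral.integral_add, intervalIntegral.integral_add,
    intervalIntegral.integral_const_mul, intervalIntegral.integral_const_mul,
    intervalIntegral.integral_const_mul, intervalIntegral.integral_const_mul, hrv, hvv]
  · ring
  all_goals exact Continuous.intervalIntegrable (by fun_prop) _ _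

theorem acousticEnergy_le {γ ε : ℝ} {r rx v vx : ℝ → ℝ} (hγ : 1 ≤ γ) (hε : ε ∈ Icc (0:ℝ) 1)
    (hr : Continuous r) (hrx : Continuous rx) (hv : Continuous v)
    (hr_le : ∫ x in (0:ℝ)..1, r x ^ 2 ≤ ∫ x in (0:ℝ)..1, rx x ^ 2)
    (hv_le : ∫ x in (0:ℝ)..1, v x ^ 2 ≤ ∫ x in (0:ℝ)..1, vx x ^ 2) :
    acousticEnergy γ ε r rx v ≤ γ * (∫ x in (0:ℝ)..1, rx x ^ 2) + ∫ x in (0:ℝ)..1, vx x ^ 2 := by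
  obtain ⟨hε0, hε1⟩ := hε
  have hint : ∀ {g : ℝ → ℝ}, Continuous g → IntervalIntegrable (fun x => g x ^ 2) volume 0 1 :=
    fun hg => (hg.pow 2).intervalIntegrable _ _
  have hrx_nonneg : 0 ≤ ∫ x in (0:ℝ)..1, rx x ^ 2 :=
    intervalIntegral.integral_nonneg zero_le_one fun x _ => sq_nonneg _
  have hv_nonneg : 0 ≤ ∫ x in (0:ℝ)..1, v x ^ 2 :=
    intervalIntegral.integral_nonneg zero_le_one fun x _ => sq_nonneg _
  -- Young's inequality on the cross term, then `ε ≤ 1`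
  have hdensity : ∀ x, 1/2 * (γ * (r x)^2 + (v x)^2) + ε/2 * v x * rx x + ε^2/4 * (rx x)^2
      ≤ γ/2 * r x ^ 2 + 3/4 * v x ^ 2 + 1/2 * rx x ^ 2 := fun x => by
    nlinarith [mul_nonneg hε0 (sq_nonneg (v x - rx x)),
      mul_nonneg (sub_nonneg.mpr hε1) (sq_nonneg (v x)),
      mul_nonneg (sub_nonneg.mpr hε1) (sq_nonneg (rx x)),
      mul_nonneg (mul_nonneg hε0 (sub_nonneg.mpr hε1)) (sq_nonneg (rx x))]
  calc acousticEnergy γ ε r rx v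
      ≤ ∫ x in (0:ℝ)..1, (γ/2 * r x ^ 2 + 3/4 * v x ^ 2 + 1/2 * rx x ^ 2) :=
        intervalIntegral.integral_mono_on zero_le_one
          (Continuous.intervalIntegrable (by fun_prop) _ _)
          (((hint hr).const_mul _).add ((hint hv).const_mul _) |>.add ((hint hrx).const_mul _))
          fun x _ => hdensity x
    _ = γ/2 * (∫ x in (0:ℝ)..1, r x ^ 2) + 3/4 * (∫ x in (0:ℝ)..1, v x ^ 2)
          + 1/2 * ∫ x in (0:ℝ)..1, rx x ^ 2 := by
        rw [intervalIntegral.integral_add (((hint hr).const_mul _).add ((hint hv).const_mul _))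
            ((hint hrx).const_mul _),
          intervalIntegral.integral_add ((hint hr).const_mul _) ((hint hv).const_mul _)]
        simp only [intervalIntegral.integral_const_mul]
    _ ≤ γ * (∫ x in (0:ℝ)..1, rx x ^ 2) + ∫ x in (0:ℝ)..1, vx x ^ 2 := by
        linarith [mul_le_mul_of_nonneg_left hr_le (by linarith : (0:ℝ) ≤ γ / 2),
          mul_nonneg (sub_nonneg.mpr hγ) hrx_nonneg]

/-- Exponential decay of the energy G along smooth solutions of the
    deterministic acoustic system r_t + (1/ε)v_x = 0, v_t + (γ/ε)r_x = v_xx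
    with Dirichlet conditions on v and mean-zero r: G(t) ≤ G(0) e^{−t/2}. -/
theorem stmt_9 (γ ε : ℝ) (hγ : 1 ≤ γ) (hε : ε ∈ Set.Ioc (0:ℝ) 1)
    (r v rt rx vt vx vxx : ℝ → ℝ → ℝ)
    (hrt : ∀ t x, HasDerivAt (fun s => r s x) (rt t x) t)
    (hrx : ∀ t x, HasDerivAt (fun y => r t y) (rx t x) x)
    (hvt : ∀ t x, HasDerivAt (fun s => v s x) (vt t x) t)
    (hvx : ∀ t x, HasDerivAt (fun y => v t y) (vx t x) x)
    (hvxx : ∀ t x, HasDerivAt (fun y => vx t y) (vxx t x) x)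
    (hcont : Continuous fun p : ℝ × ℝ =>
      (r p.1 p.2, rx p.1 p.2, rt p.1 p.2, v p.1 p.2, vx p.1 p.2, vt p.1 p.2, vxx p.1 p.2))
    (heq1 : ∀ t x, rt t x + (1/ε) * vx t x = 0)
    (heq2 : ∀ t x, vt t x + (γ/ε) * rx t x = vxx t x)
    (hbc0 : ∀ t, v t 0 = 0) (hbc1 : ∀ t, v t 1 = 0)
    (hmean : ∀ t, (∫ x in (0:ℝ)..1, r t x) = 0)
    (G : ℝ → ℝ)
    (hG : ∀ t, G t = ∫ x in (0:ℝ)..1,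
      (1/2 * (γ * (r t x)^2 + (v t x)^2) + ε/2 * v t x * rx t x + ε^2/4 * (rx t x)^2)) :
    ∀ t ≥ (0:ℝ), G t ≤ G 0 * Real.exp (-t/2) := by
  have hr : Continuous (uncurry r) := hcont.fst
  have hrx_cont : Continuous (uncurry rx) := hcont.snd.fst
  have hv : Continuous (uncurry v) := hcont.snd.snd.snd.fst
  have hvx_cont : Continuous (uncurry vx) := hcont.snd.snd.snd.snd.fst
  have hvxx_cont : Continuous (uncurry vxx) := hcont.snd.snd.snd.snd.snd.snd
  have hG_eq : G = fun t => acousticEnergy γ ε (r t) (rx t) (v t) := funext hG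
  have hG_deriv := hasDerivAt_acousticEnergy hε.1.ne' (γ := γ)
    (fun t x => (hrt t x).congr_deriv (by linarith [heq1 t x])) hrx
    (fun t x => (hvt t x).congr_deriv (by linarith [heq2 t x])) hvx hvxx
    hr hrx_cont hv hvx_cont hvxx_cont hbc0 hbc1
  have hG_le : ∀ t, G t ≤ γ * (∫ x in (0:ℝ)..1, rx t x ^ 2) + ∫ x in (0:ℝ)..1, vx t x ^ 2 := by
    intro t
    obtain ⟨c, hc, hrc⟩ := exists_eq_zero_of_intervalIntegral_eq_zero one_pos
      (hr.uncurry_left t).continuousOn (hmean t)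
    rw [hG_eq]
    refine acousticEnergy_le hγ (Ioc_subset_Icc_self hε) (hr.uncurry_left t)
      (hrx_cont.uncurry_left t) (hv.uncurry_left t) ?_ ?_
    · simpa using integral_sq_le_mul_integral_sq_deriv zero_le_one (hrx t)
        (hrx_cont.uncurry_left t) hc hrc
    · simpa using integral_sq_le_mul_integral_sq_deriv zero_le_one (hvx t)
        (hvx_cont.uncurry_left t) (left_mem_Icc.mpr zero_le_one) (hbc0 t)
  intro t ht
  rw [hG_eq] at hG_le ⊢
  simpa [neg_div, div_eq_inv_mul] using le_mul_exp_of_hasDerivAt_le_mul hG_deriv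
    (K := -(1/2)) (fun t => by linarith [hG_le t]) ht
end

section
/- Let (Y_t)_{t∈[0,T]} be a nonnegative random process, Y its supremum over [0,T], and suppose for all integers k ≥ 0, E[Y^k] ≤ 3^{k−1} e^T A_k + C_k e^T T^{k+1} B^k, where A_k = E[E₀^k] for a nonnegative random variable E₀, B ≥ 0, and C_k ≤ C·1296^k k^k for some constant C. Then for η > 0 with 3η in the radius of convergence of the exponential moment of E₀ and 4000 T η B < 1, E[exp(ηY)] ≤ (e^T/3)·E[exp(3ηE₀)] + C' T e^T / (1 − 4000 T η B) for a constant C' depending only on C. -/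
open MeasureTheory

lemma real_exp_eq_tsum' (x : ℝ) : Real.exp x = ∑' n : ℕ, x ^ n / n.factorial := by
  rw [Real.exp_eq_exp_ℝ, NormedSpace.exp_eq_tsum_div]

lemma pow_self_le_factorial_mul' (k : ℕ) :
    (k : ℝ) ^ k ≤ (k.factorial : ℝ) * Real.exp 1 ^ k := by
  have h := Real.pow_div_factorial_le_exp (x := (k:ℝ)) (Nat.cast_nonneg k) k
  have hek : Real.exp (k : ℝ) = Real.exp 1 ^ k := by
    rw [← Real.exp_nat_mul, mul_one]
  rw [div_le_iff₀ (by exact_mod_cast k.factorial_pos), hek] at h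
  linarith [h]

/-- Summation argument: polynomial moment bounds
    E[Yᵏ] ≤ 3^{k−1} e^T E[E₀ᵏ] + C_k e^T T^{k+1} Bᵏ with C_k ≤ C·1296ᵏ kᵏ
    yield the exponential moment bound
    E[exp(ηY)] ≤ (e^T/3) E[exp(3ηE₀)] + C' T e^T/(1 − 4000TηB). -/
theorem stmt_11 (C : ℝ) (hC : 0 ≤ C) :
    ∃ C' : ℝ, ∀ (Ω : Type) [MeasurableSpace Ω] (ℙ : Measure Ω),
      IsProbabilityMeasure ℙ →
      ∀ (Y E₀ : Ω → ℝ) (T B η : ℝ) (Ck : ℕ → ℝ),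
        0 ≤ T → 0 ≤ B → 0 < η →
        (∀ ω, 0 ≤ Y ω) → (∀ ω, 0 ≤ E₀ ω) →
        (∀ k : ℕ, Integrable (fun ω => (Y ω)^k) ℙ) →
        (∀ k : ℕ, Integrable (fun ω => (E₀ ω)^k) ℙ) →
        Integrable (fun ω => Real.exp (3 * η * E₀ ω)) ℙ →
        (∀ k : ℕ, (∫ ω, (Y ω)^k ∂ℙ) ≤
          (3:ℝ)^k / 3 * Real.exp T * (∫ ω, (E₀ ω)^k ∂ℙ) +
            Ck k * Real.exp T * T^(k+1) * B^k) →
        (∀ k : ℕ, Ck k ≤ C * 1296^k * (k:ℝ)^k) →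
        Summable (fun k : ℕ => (3*η)^k / (Nat.factorial k) * ∫ ω, (E₀ ω)^k ∂ℙ) →
        4000 * T * η * B < 1 →
        (∫ ω, Real.exp (η * Y ω) ∂ℙ) ≤
          Real.exp T / 3 * (∫ ω, Real.exp (3 * η * E₀ ω) ∂ℙ) +
            C' * T * Real.exp T / (1 - 4000 * T * η * B) := by
  refine ⟨C, ?_⟩
  intro Ω _ ℙ hP Y E₀ T B η Ck hT hB hη hY0 hE0 hYint hEint hexpint hmom hCk hsum hq
  set q : ℝ := 4000 * T * η * B with hqdef
  have hq0 : 0 ≤ q := by positivity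
  have ha0 : ∀ k : ℕ, 0 ≤ ∫ ω, (Y ω)^k ∂ℙ :=
    fun k => integral_nonneg fun ω => pow_nonneg (hY0 ω) k
  have hb0 : ∀ k : ℕ, 0 ≤ ∫ ω, (E₀ ω)^k ∂ℙ :=
    fun k => integral_nonneg fun ω => pow_nonneg (hE0 ω) k
  -- key termwise bound
  have key : ∀ k : ℕ, η^k / (Nat.factorial k) * ∫ ω, (Y ω)^k ∂ℙ ≤
      Real.exp T / 3 * ((3*η)^k / (Nat.factorial k) * ∫ ω, (E₀ ω)^k ∂ℙ)
        + C * T * Real.exp T * q^k := by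
    intro k
    have hfk : (0:ℝ) < (Nat.factorial k : ℝ) := by exact_mod_cast k.factorial_pos
    have h1 : η^k / (Nat.factorial k) * ∫ ω, (Y ω)^k ∂ℙ ≤
        η^k / (Nat.factorial k) * ((3:ℝ)^k / 3 * Real.exp T * (∫ ω, (E₀ ω)^k ∂ℙ) +
            Ck k * Real.exp T * T^(k+1) * B^k) :=
      mul_le_mul_of_nonneg_left (hmom k) (by positivity)
    refine h1.trans ?_
    rw [mul_add]
    have e1 : η^k / (Nat.factorial k) * ((3:ℝ)^k / 3 * Real.exp T * (∫ ω, (E₀ ω)^k ∂ℙ))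
        = Real.exp T / 3 * ((3*η)^k / (Nat.factorial k) * ∫ ω, (E₀ ω)^k ∂ℙ) := by
      rw [mul_pow]; ring
    rw [e1]
    gcongr _ + ?_
    have e2 : η^k / (Nat.factorial k) * (Ck k * Real.exp T * T^(k+1) * B^k)
        = T * Real.exp T * (Ck k * (T*η*B)^k / (Nat.factorial k)) := by
      rw [pow_succ, mul_pow, mul_pow]; ring
    rw [e2]
    have h3 : Ck k * (T*η*B)^k / (Nat.factorial k) ≤ C * q^k := by
      have hx0 : (0:ℝ) ≤ T*η*B := by positivity
      have hkk := pow_self_le_factorial_mul' k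
      calc Ck k * (T*η*B)^k / (Nat.factorial k)
          ≤ (C * 1296^k * (k:ℝ)^k) * (T*η*B)^k / (Nat.factorial k) := by
            gcongr
            exact hCk k
        _ ≤ (C * 1296^k * ((Nat.factorial k : ℝ) * Real.exp 1 ^ k)) * (T*η*B)^k
              / (Nat.factorial k) := by gcongr
        _ = C * (1296 * Real.exp 1 * (T*η*B))^k := by
            rw [div_eq_iff (ne_of_gt hfk), mul_pow, mul_pow]
            ring
        _ ≤ C * q^k := by
            have hle : 1296 * Real.exp 1 * (T*η*B) ≤ q := by
              have he : Real.exp 1 < 2.7182818286 := Real.exp_one_lt_d9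
              have : (1296 : ℝ) * Real.exp 1 ≤ 4000 := by nlinarith
              calc 1296 * Real.exp 1 * (T*η*B) ≤ 4000 * (T*η*B) :=
                    mul_le_mul_of_nonneg_right this hx0
                _ = q := by rw [hqdef]; ring
            exact mul_le_mul_of_nonneg_left
              (pow_le_pow_left₀ (by positivity) hle k) hC
    calc T * Real.exp T * (Ck k * (T*η*B)^k / (Nat.factorial k))
        ≤ T * Real.exp T * (C * q^k) := by
          apply mul_le_mul_of_nonneg_left h3 (by positivity)
      _ = C * T * Real.exp T * q^k := by ring
  -- summability
  have hS1 : Summable (fun k : ℕ =>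
      Real.exp T / 3 * ((3*η)^k / (Nat.factorial k) * ∫ ω, (E₀ ω)^k ∂ℙ)) :=
    hsum.mul_left _
  have hS2 : Summable (fun k : ℕ => C * T * Real.exp T * q^k) :=
    (summable_geometric_of_lt_one hq0 hq).mul_left _
  have hSa : Summable (fun k : ℕ => η^k / (Nat.factorial k) * ∫ ω, (Y ω)^k ∂ℙ) :=
    Summable.of_nonneg_of_le (fun k => mul_nonneg (by positivity) (ha0 k)) key (hS1.add hS2)
  -- exchange of sum and integral for Y
  have hintY : ∀ k : ℕ, Integrable (fun ω => (η * Y ω)^k / (Nat.factorial k)) ℙ := by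
    intro k
    have := ((hYint k).const_mul (η^k)).div_const (Nat.factorial k)
    refine this.congr (Filter.Eventually.of_forall fun ω => ?_)
    show η ^ k * Y ω ^ k / (Nat.factorial k : ℝ) = (η * Y ω) ^ k / (Nat.factorial k : ℝ)
    rw [mul_pow]
  have hnormY : (fun k : ℕ => ∫ ω, ‖(η * Y ω)^k / (Nat.factorial k)‖ ∂ℙ)
      = fun k : ℕ => η^k / (Nat.factorial k) * ∫ ω, (Y ω)^k ∂ℙ := by
    funext k
    rw [← integral_const_mul]
    congr 1; funext ω
    rw [Real.norm_of_nonneg (div_nonneg (pow_nonneg (mul_nonneg hη.le (hY0 ω)) k)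
      (Nat.cast_nonneg _)), mul_pow]
    ring
  have hYexp : ∫ ω, Real.exp (η * Y ω) ∂ℙ
      = ∑' k : ℕ, η^k / (Nat.factorial k) * ∫ ω, (Y ω)^k ∂ℙ := by
    have hs : Summable (fun k : ℕ => ∫ ω, ‖(η * Y ω)^k / (Nat.factorial k)‖ ∂ℙ) := by
      rw [hnormY]; exact hSa
    calc ∫ ω, Real.exp (η * Y ω) ∂ℙ
        = ∫ ω, ∑' k : ℕ, (η * Y ω)^k / (Nat.factorial k) ∂ℙ := by
          simp_rw [real_exp_eq_tsum']
      _ = ∑' k : ℕ, ∫ ω, (η * Y ω)^k / (Nat.factorial k) ∂ℙ :=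
          (integral_tsum_of_summable_integral_norm hintY hs).symm
      _ = ∑' k : ℕ, η^k / (Nat.factorial k) * ∫ ω, (Y ω)^k ∂ℙ := by
          congr 1; funext k
          rw [← integral_const_mul]
          congr 1; funext ω
          rw [mul_pow]; ring
  -- exchange for E₀
  have hintE : ∀ k : ℕ, Integrable (fun ω => (3 * η * E₀ ω)^k / (Nat.factorial k)) ℙ := by
    intro k
    have := ((hEint k).const_mul ((3*η)^k)).div_const (Nat.factorial k)
    refine this.congr (Filter.Eventually.of_forall fun ω => ?_)
    show (3*η) ^ k * E₀ ω ^ k / (Nat.factorial k : ℝ) = (3 * η * E₀ ω) ^ k / (Nat.factorial k : ℝ)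
    rw [mul_pow]; ring
  have hEexp : ∑' k : ℕ, (3*η)^k / (Nat.factorial k) * ∫ ω, (E₀ ω)^k ∂ℙ
      = ∫ ω, Real.exp (3 * η * E₀ ω) ∂ℙ := by
    have hs : Summable (fun k : ℕ => ∫ ω, ‖(3 * η * E₀ ω)^k / (Nat.factorial k)‖ ∂ℙ) := by
      have : (fun k : ℕ => ∫ ω, ‖(3 * η * E₀ ω)^k / (Nat.factorial k)‖ ∂ℙ)
          = fun k : ℕ => (3*η)^k / (Nat.factorial k) * ∫ ω, (E₀ ω)^k ∂ℙ := by
        funext k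
        rw [← integral_const_mul]
        congr 1; funext ω
        rw [Real.norm_of_nonneg (div_nonneg (pow_nonneg
          (mul_nonneg (by positivity) (hE0 ω)) k) (Nat.cast_nonneg _)), mul_pow]
        ring
      rw [this]; exact hsum
    calc ∑' k : ℕ, (3*η)^k / (Nat.factorial k) * ∫ ω, (E₀ ω)^k ∂ℙ
        = ∑' k : ℕ, ∫ ω, (3 * η * E₀ ω)^k / (Nat.factorial k) ∂ℙ := by
          congr 1; funext k
          rw [← integral_const_mul]
          congr 1; funext ω
          rw [mul_pow]; ring
      _ = ∫ ω, ∑' k : ℕ, (3 * η * E₀ ω)^k / (Nat.factorial k) ∂ℙ :=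
          integral_tsum_of_summable_integral_norm hintE hs
      _ = ∫ ω, Real.exp (3 * η * E₀ ω) ∂ℙ := by
          simp_rw [real_exp_eq_tsum']
  -- conclude
  rw [hYexp]
  calc ∑' k : ℕ, η^k / (Nat.factorial k) * ∫ ω, (Y ω)^k ∂ℙ
      ≤ ∑' k : ℕ, (Real.exp T / 3 * ((3*η)^k / (Nat.factorial k) * ∫ ω, (E₀ ω)^k ∂ℙ)
          + C * T * Real.exp T * q^k) := Summable.tsum_le_tsum key hSa (hS1.add hS2)
    _ = Real.exp T / 3 * (∑' k : ℕ, (3*η)^k / (Nat.factorial k) * ∫ ω, (E₀ ω)^k ∂ℙ)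
          + C * T * Real.exp T * ∑' k : ℕ, q^k := by
        rw [Summable.tsum_add hS1 hS2, tsum_mul_left, tsum_mul_left]
    _ = Real.exp T / 3 * (∫ ω, Real.exp (3 * η * E₀ ω) ∂ℙ)
          + C * T * Real.exp T / (1 - 4000 * T * η * B) := by
        rw [hEexp, tsum_geometric_of_lt_one hq0 hq, hqdef]; ring
end

section
/- Let ε ∈ (0,1] and (ρ,u) ∈ H¹(0,1) × H¹₀(0,1) with ρ > 0 and ∫₀¹ ρ = 1. Define K(ρ,u) = (1/2)‖u_x‖²_{L²} + (1/(2ε²))‖(log ρ)_x‖²_{L²} and E(ρ,u) = ∫₀¹((1/2)ρu² + (1/ε²)(ρ log ρ − ρ + 1) + (1/2)ρ_x u/ρ + (1/4)ρ_x²/ρ³)dx. Then E(ρ,u) ≤ (3/2 + 2‖ρ‖²_{L∞} + ε²‖ρ^{-1}‖_{L∞})·K(ρ,u). -/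
/-! Pointwise, `ρ log ρ - ρ + 1 ≤ (ρ - 1)²` and AM-GM absorbs the cross term `ρ_x u / (2ρ)`
into `ρu²/4 + ρ_x²/(4ρ³)`. What remains is controlled by the one-dimensional Sobolev bound
`(g y - g x)² ≤ ∫₀¹ g_x²` (fundamental theorem of calculus and Cauchy–Schwarz), anchored for `u`
at `u 0 = 0` and for `ρ` at a point where `ρ = 1`, which exists by the mean value theorem for
integrals since `∫ ρ = 1`. Writing `ρ_x = ρ (log ρ)_x` then brings in `‖ρ‖_∞` and `‖ρ⁻¹‖_∞`. -/

open MeasureTheory Set intervalIntegral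
open scoped Interval

theorem sq_intervalIntegral_le_mul_intervalIntegral_sq {f : ℝ → ℝ} {a b : ℝ} (hab : a ≤ b)
    (hf : IntervalIntegrable f volume a b)
    (hf2 : IntervalIntegrable (fun x => f x ^ 2) volume a b) :
    (∫ x in a..b, f x) ^ 2 ≤ (b - a) * ∫ x in a..b, f x ^ 2 := by
  rcases hab.eq_or_lt with rfl | hlt
  · simp
  have hL : b - a ≠ 0 := (sub_pos.2 hlt).ne'
  have jensen := (even_two.convexOn_pow (𝕜 := ℝ)).map_set_average_le
    (continuous_pow 2).continuousOn isClosed_univ (μ := volume) (t := Ι a b) (by simp [hL])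
    (by simp) (by simp) hf.def' hf2.def'
  simp only [interval_average_eq, smul_eq_mul] at jensen
  calc (∫ x in a..b, f x) ^ 2 = (b - a) ^ 2 * ((b - a)⁻¹ * ∫ x in a..b, f x) ^ 2 := by
        field_simp
    _ ≤ (b - a) ^ 2 * ((b - a)⁻¹ * ∫ x in a..b, f x ^ 2) := by gcongr
    _ = (b - a) * ∫ x in a..b, f x ^ 2 := by field_simp

theorem sq_sub_le_mul_intervalIntegral_sq_deriv {g g' : ℝ → ℝ} {a b x y : ℝ}
    (hg : ∀ t ∈ Icc a b, HasDerivAt g (g' t) t) (hg' : ContinuousOn g' (Icc a b))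
    (hx : x ∈ Icc a b) (hy : y ∈ Icc a b) :
    (g y - g x) ^ 2 ≤ (b - a) * ∫ t in a..b, g' t ^ 2 := by
  wlog hxy : x ≤ y generalizing x y
  · rw [← neg_sub, neg_sq]
    exact this hy hx (le_of_not_ge hxy)
  have hsub : Icc x y ⊆ Icc a b := Icc_subset_Icc hx.1 hy.2
  have ftc : ∫ t in x..y, g' t = g y - g x :=
    integral_eq_sub_of_hasDerivAt (fun t ht => hg t (hsub (uIcc_of_le hxy ▸ ht)))
      ((hg'.mono hsub).intervalIntegrable_of_Icc hxy)
  rw [← ftc]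
  calc (∫ t in x..y, g' t) ^ 2 ≤ (y - x) * ∫ t in x..y, g' t ^ 2 :=
        sq_intervalIntegral_le_mul_intervalIntegral_sq hxy
          ((hg'.mono hsub).intervalIntegrable_of_Icc hxy)
          (((hg'.mono hsub).pow 2).intervalIntegrable_of_Icc hxy)
    _ ≤ (b - a) * ∫ t in a..b, g' t ^ 2 := by
        have hab : a ≤ b := hx.1.trans hx.2
        refine mul_le_mul (by linarith [hx.1, hy.2]) ?_
          (integral_nonneg hxy fun t _ => sq_nonneg _) (sub_nonneg.2 hab)
        exact integral_mono_interval hx.1 hxy hy.2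
          (Filter.Eventually.of_forall fun t => sq_nonneg _)
          ((hg'.pow 2).intervalIntegrable_of_Icc hab)

theorem exists_eq_one_of_intervalIntegral_eq_one {f : ℝ → ℝ} (hf : ContinuousOn f (Icc 0 1))
    (h : ∫ x in (0:ℝ)..1, f x = 1) : ∃ c ∈ Icc (0:ℝ) 1, f c = 1 := by
  obtain ⟨c, hc, hfc⟩ := exists_eq_interval_average zero_ne_one (by rwa [uIcc_of_le zero_le_one])
  rw [interval_average_eq, h] at hfc
  exact ⟨c, Ioo_subset_Icc_self (by rwa [uIoo_of_le zero_le_one] at hc), by simpa using hfc⟩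

theorem mul_log_sub_add_one_le_sq {r : ℝ} (hr : 0 < r) : r * Real.log r - r + 1 ≤ (r - 1) ^ 2 := by
  nlinarith [mul_le_mul_of_nonneg_left (Real.log_le_sub_one_of_pos hr) hr.le]

theorem half_mul_mul_div_le {p v r : ℝ} (hr : 0 < r) :
    1/2 * p * v / r ≤ 1/4 * (r * v ^ 2) + 1/4 * (p ^ 2 / r ^ 3) := by
  have hsq : 1/4 * (r * v ^ 2) + 1/4 * (p ^ 2 / r ^ 3) - 1/2 * p * v / r
      = (r ^ 2 * v - p) ^ 2 / (4 * r ^ 3) := by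
    field_simp
    ring
  have : 0 ≤ (r ^ 2 * v - p) ^ 2 / (4 * r ^ 3) := by positivity
  linarith

theorem energy_density_le (ε : ℝ) {r p v : ℝ} (hr : 0 < r) :
    1/2 * r * v ^ 2 + (r * Real.log r - r + 1) / ε ^ 2 + 1/2 * p * v / r + 1/4 * p ^ 2 / r ^ 3
      ≤ 3/4 * (r * v ^ 2) + (r - 1) ^ 2 / ε ^ 2 + 1/2 * (p ^ 2 / r ^ 3) := by
  have hlog : (r * Real.log r - r + 1) / ε ^ 2 ≤ (r - 1) ^ 2 / ε ^ 2 :=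
    div_le_div_of_nonneg_right (mul_log_sub_add_one_le_sq hr) (sq_nonneg ε)
  have hcross := half_mul_mul_div_le (p := p) (v := v) hr
  have : 1/4 * p ^ 2 / r ^ 3 = 1/4 * (p ^ 2 / r ^ 3) := by ring
  linarith

theorem integral_energy_density_le (ε : ℝ) {ρ ρ' u : ℝ → ℝ} {a b : ℝ} (hab : a ≤ b)
    (hρ : ContinuousOn ρ (Icc a b)) (hρ' : ContinuousOn ρ' (Icc a b))
    (hu : ContinuousOn u (Icc a b)) (hpos : ∀ x ∈ Icc a b, 0 < ρ x) :
    ∫ x in a..b, (1/2 * ρ x * u x ^ 2 + (ρ x * Real.log (ρ x) - ρ x + 1) / ε ^ 2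
        + 1/2 * ρ' x * u x / ρ x + 1/4 * ρ' x ^ 2 / ρ x ^ 3) ≤
      3/4 * (∫ x in a..b, ρ x * u x ^ 2) + (∫ x in a..b, (ρ x - 1) ^ 2) / ε ^ 2
        + 1/2 * ∫ x in a..b, ρ' x ^ 2 / ρ x ^ 3 := by
  have hI₁ : IntervalIntegrable (fun x => ρ x * u x ^ 2) volume a b :=
    (hρ.mul (hu.pow 2)).intervalIntegrable_of_Icc hab
  have hI₂ : IntervalIntegrable (fun x => (ρ x - 1) ^ 2) volume a b :=
    ((hρ.sub continuousOn_const).pow 2).intervalIntegrable_of_Icc hab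
  have hI₃ : IntervalIntegrable (fun x => ρ' x ^ 2 / ρ x ^ 3) volume a b :=
    ((hρ'.pow 2).div (hρ.pow 3) fun x hx => pow_ne_zero 3 (hpos x hx).ne').intervalIntegrable_of_Icc
      hab
  rw [← intervalIntegral.integral_const_mul, ← intervalIntegral.integral_const_mul,
    ← intervalIntegral.integral_div, ← integral_add (hI₁.const_mul _) (hI₂.div_const _),
    ← integral_add ((hI₁.const_mul _).add (hI₂.div_const _)) (hI₃.const_mul _)]
  refine integral_mono_on hab ?_ ?_ fun x hx => energy_density_le ε (hpos x hx)
  all_goals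
    refine ContinuousOn.intervalIntegrable_of_Icc hab ?_
    fun_prop (disch := intro x hx; have := hpos x hx; positivity)

theorem integral_mul_sq_le_mul_intervalIntegral_sq_deriv {ρ u u' : ℝ → ℝ}
    (hρ : ContinuousOn ρ (Icc 0 1)) (hρ0 : ∀ x ∈ Icc (0:ℝ) 1, 0 ≤ ρ x)
    (hu : ∀ x ∈ Icc (0:ℝ) 1, HasDerivAt u (u' x) x) (hu' : ContinuousOn u' (Icc 0 1))
    (hu0 : u 0 = 0) :
    ∫ x in (0:ℝ)..1, ρ x * u x ^ 2 ≤ (∫ x in (0:ℝ)..1, ρ x) * ∫ x in (0:ℝ)..1, u' x ^ 2 := by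
  have hu_sq : ∀ x ∈ Icc (0:ℝ) 1, u x ^ 2 ≤ ∫ t in (0:ℝ)..1, u' t ^ 2 := fun x hx => by
    simpa [hu0] using sq_sub_le_mul_intervalIntegral_sq_deriv hu hu' (left_mem_Icc.2 zero_le_one) hx
  have huc : ContinuousOn u (Icc 0 1) := fun x hx => (hu x hx).continuousAt.continuousWithinAt
  rw [← intervalIntegral.integral_mul_const]
  refine integral_mono_on zero_le_one ((hρ.mul (huc.pow 2)).intervalIntegrable_of_Icc zero_le_one)
    ((hρ.mul continuousOn_const).intervalIntegrable_of_Icc zero_le_one) fun x hx => ?_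
  exact mul_le_mul_of_nonneg_left (hu_sq x hx) (hρ0 x hx)

theorem integral_sq_sub_one_le {ρ ρ' : ℝ → ℝ} (hρ : ∀ x ∈ Icc (0:ℝ) 1, HasDerivAt ρ (ρ' x) x)
    (hρ' : ContinuousOn ρ' (Icc 0 1)) (hpos : ∀ x ∈ Icc (0:ℝ) 1, 0 < ρ x)
    (hmass : ∫ x in (0:ℝ)..1, ρ x = 1) :
    ∫ x in (0:ℝ)..1, (ρ x - 1) ^ 2 ≤
      sSup (ρ '' Icc 0 1) ^ 2 * ∫ x in (0:ℝ)..1, (ρ' x / ρ x) ^ 2 := by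
  have hρc : ContinuousOn ρ (Icc 0 1) := fun x hx => (hρ x hx).continuousAt.continuousWithinAt
  obtain ⟨x₀, hx₀, hρx₀⟩ := exists_eq_one_of_intervalIntegral_eq_one hρc hmass
  calc ∫ x in (0:ℝ)..1, (ρ x - 1) ^ 2 ≤ ∫ x in (0:ℝ)..1, ∫ t in (0:ℝ)..1, ρ' t ^ 2 := by
        refine integral_mono_on zero_le_one
          (((hρc.sub continuousOn_const).pow 2).intervalIntegrable_of_Icc zero_le_one)
          intervalIntegrable_const fun x hx => ?_
        simpa [hρx₀] using sq_sub_le_mul_intervalIntegral_sq_deriv hρ hρ' hx₀ hx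
    _ = ∫ x in (0:ℝ)..1, ρ' x ^ 2 := by simp
    _ ≤ ∫ x in (0:ℝ)..1, sSup (ρ '' Icc 0 1) ^ 2 * (ρ' x / ρ x) ^ 2 := by
        refine integral_mono_on zero_le_one ((hρ'.pow 2).intervalIntegrable_of_Icc zero_le_one)
          ((((hρ'.div hρc fun x hx => (hpos x hx).ne').pow 2).const_mul _).intervalIntegrable_of_Icc
            zero_le_one) fun x hx => ?_
        have hρx := hpos x hx
        calc ρ' x ^ 2 = ρ x ^ 2 * (ρ' x / ρ x) ^ 2 := by field_simp
          _ ≤ sSup (ρ '' Icc 0 1) ^ 2 * (ρ' x / ρ x) ^ 2 := by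
            gcongr
            exact hρc.le_sSup_image_Icc hx
    _ = sSup (ρ '' Icc 0 1) ^ 2 * ∫ x in (0:ℝ)..1, (ρ' x / ρ x) ^ 2 :=
        intervalIntegral.integral_const_mul _ _

theorem integral_sq_div_cube_le {ρ p : ℝ → ℝ} {a b : ℝ} (hab : a ≤ b)
    (hρ : ContinuousOn ρ (Icc a b)) (hp : ContinuousOn p (Icc a b))
    (hpos : ∀ x ∈ Icc a b, 0 < ρ x) :
    ∫ x in a..b, p x ^ 2 / ρ x ^ 3 ≤
      sSup ((fun x => (ρ x)⁻¹) '' Icc a b) * ∫ x in a..b, (p x / ρ x) ^ 2 := by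
  have hinv : ContinuousOn (fun x => (ρ x)⁻¹) (Icc a b) := hρ.inv₀ fun x hx => (hpos x hx).ne'
  rw [← intervalIntegral.integral_const_mul]
  refine integral_mono_on hab ?_ ?_ fun x hx => ?_
  iterate 2
    refine ContinuousOn.intervalIntegrable_of_Icc hab ?_
    fun_prop (disch := intro x hx; have := hpos x hx; positivity)
  have hρx := hpos x hx
  calc p x ^ 2 / ρ x ^ 3 = (ρ x)⁻¹ * (p x / ρ x) ^ 2 := by field_simp
    _ ≤ sSup ((fun x => (ρ x)⁻¹) '' Icc a b) * (p x / ρ x) ^ 2 := by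
      gcongr
      exact hinv.le_sSup_image_Icc hx

theorem stmt_19_general (ε : ℝ) (hε : ε ∈ Set.Ioc (0:ℝ) 1)
    (ρ ρ' u u' : ℝ → ℝ)
    (hρ : ∀ x, HasDerivAt ρ (ρ' x) x)
    (hu : ∀ x, HasDerivAt u (u' x) x)
    (hρ' : ContinuousOn ρ' (Set.Icc 0 1))
    (hu' : ContinuousOn u' (Set.Icc 0 1))
    (hpos : ∀ x ∈ Set.Icc (0:ℝ) 1, 0 < ρ x)
    (hmass : (∫ x in (0:ℝ)..1, ρ x) = 1)
    (hu0 : u 0 = 0) :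
    (∫ x in (0:ℝ)..1,
        (1/2 * ρ x * (u x)^2 + (ρ x * Real.log (ρ x) - ρ x + 1) / ε^2 +
          1/2 * ρ' x * u x / ρ x + 1/4 * (ρ' x)^2 / (ρ x)^3)) ≤
      (3/2 + 2 * (sSup ((fun x => ρ x) '' Set.Icc (0:ℝ) 1))^2 +
          ε^2 * sSup ((fun x => (ρ x)⁻¹) '' Set.Icc (0:ℝ) 1)) *
        (1/2 * (∫ x in (0:ℝ)..1, (u' x)^2) +
          1/(2*ε^2) * ∫ x in (0:ℝ)..1, (ρ' x / ρ x)^2) := by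
  have hρc : ContinuousOn ρ (Icc 0 1) := fun x _ => (hρ x).continuousAt.continuousWithinAt
  have huc : ContinuousOn u (Icc 0 1) := fun x _ => (hu x).continuousAt.continuousWithinAt
  have hkinetic := integral_mul_sq_le_mul_intervalIntegral_sq_deriv hρc
    (fun x hx => (hpos x hx).le) (fun x _ => hu x) hu' hu0
  rw [hmass, one_mul] at hkinetic
  have hentropy := integral_sq_sub_one_le (fun x _ => hρ x) hρ' hpos hmass
  have hfisher := integral_sq_div_cube_le zero_le_one hρc hρ' hpos
  set M := sSup ((fun x => ρ x) '' Icc (0:ℝ) 1)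
  set m := sSup ((fun x => (ρ x)⁻¹) '' Icc (0:ℝ) 1)
  set K₁ := ∫ x in (0:ℝ)..1, u' x ^ 2
  set K₂ := ∫ x in (0:ℝ)..1, (ρ' x / ρ x) ^ 2
  have hm : 0 ≤ m := (inv_pos.2 (hpos 0 (left_mem_Icc.2 zero_le_one))).le.trans
    ((hρc.inv₀ fun x hx => (hpos x hx).ne').le_sSup_image_Icc (left_mem_Icc.2 zero_le_one))
  have hK₁ : 0 ≤ K₁ := integral_nonneg zero_le_one fun x _ => sq_nonneg _
  have hK₂ : 0 ≤ K₂ := integral_nonneg zero_le_one fun x _ => sq_nonneg _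
  have hε0 : ε ≠ 0 := hε.1.ne'
  have hexpand : (3/2 + 2 * M ^ 2 + ε ^ 2 * m) * (1/2 * K₁ + 1/(2 * ε ^ 2) * K₂)
      = 3/4 * K₁ + M ^ 2 * K₂ / ε ^ 2 + 1/2 * (m * K₂)
        + (M ^ 2 * K₁ + ε ^ 2 * m * K₁ / 2 + 3 / (4 * ε ^ 2) * K₂) := by
    field_simp
    ring
  calc _ ≤ 3/4 * (∫ x in (0:ℝ)..1, ρ x * u x ^ 2) + (∫ x in (0:ℝ)..1, (ρ x - 1) ^ 2) / ε ^ 2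
          + 1/2 * ∫ x in (0:ℝ)..1, ρ' x ^ 2 / ρ x ^ 3 :=
        integral_energy_density_le ε zero_le_one hρc hρ' huc hpos
    _ ≤ 3/4 * K₁ + M ^ 2 * K₂ / ε ^ 2 + 1/2 * (m * K₂) := by gcongr
    _ ≤ _ := by
        rw [hexpand]
        exact le_add_of_nonneg_right (by positivity)

/-- Isothermal coercivity: E(ρ,u) ≤ (3/2 + 2‖ρ‖²_{L∞} + ε²‖ρ⁻¹‖_{L∞}) K(ρ,u)
    for (ρ,u) ∈ H¹ × H¹₀ with ρ > 0 and ∫₀¹ ρ = 1, where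
    K = (1/2)‖u_x‖² + (1/(2ε²))‖(log ρ)_x‖² and E is the modified energy. -/
theorem stmt_19 (ε : ℝ) (hε : ε ∈ Set.Ioc (0:ℝ) 1)
    (ρ ρ' u u' : ℝ → ℝ)
    (hρ : ∀ x, HasDerivAt ρ (ρ' x) x)
    (hu : ∀ x, HasDerivAt u (u' x) x)
    (hρ' : ContinuousOn ρ' (Set.Icc 0 1))
    (hu' : ContinuousOn u' (Set.Icc 0 1))
    (hpos : ∀ x ∈ Set.Icc (0:ℝ) 1, 0 < ρ x)
    (hmass : (∫ x in (0:ℝ)..1, ρ x) = 1)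
    (hu0 : u 0 = 0) (hu1 : u 1 = 0) :
    (∫ x in (0:ℝ)..1,
        (1/2 * ρ x * (u x)^2 + (ρ x * Real.log (ρ x) - ρ x + 1) / ε^2 +
          1/2 * ρ' x * u x / ρ x + 1/4 * (ρ' x)^2 / (ρ x)^3)) ≤
      (3/2 + 2 * (sSup ((fun x => ρ x) '' Set.Icc (0:ℝ) 1))^2 +
          ε^2 * sSup ((fun x => (ρ x)⁻¹) '' Set.Icc (0:ℝ) 1)) *
        (1/2 * (∫ x in (0:ℝ)..1, (u' x)^2) +
          1/(2*ε^2) * ∫ x in (0:ℝ)..1, (ρ' x / ρ x)^2) :=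
  stmt_19_general ε hε ρ ρ' u u' hρ hu hρ' hu' hpos hmass hu0
end
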